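/- Let D ≥ 1, θ > 0, N ∈ ℕ, and u, v ∈ ℝ^D. Then the moments of the Maxwell–Boltzmann distribution up to order N are unchanged by N-th order truncation in the fluid velocity: for every m ≤ N, ∫_{ℝ^D} (c·v)^m f^{eq,(N)}_u(c) dc = ∫_{ℝ^D} (c·v)^m f^eq_u(c) dc. -/

import Mathlib

open MeasureTheory Real Finset

/-- The Maxwell–Boltzmann equilibrium distribution with unit density, fluid
velocity `u` and temperature `θ`: `f^eq_u(c) = (2πθ)^{-D/2} exp(-‖c-u‖²/(2θ))`. -/
noncomputable def maxwellBoltzmann (D : ℕ) (θ : ℝ) (u c : EuclideanSpace ℝ (Fin D)) : ℝ :=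
  (2 * π * θ) ^ (-(D : ℝ) / 2) * Real.exp (-‖c - u‖ ^ 2 / (2 * θ))

/-- The `N`-th order truncation of the Maxwell–Boltzmann distribution in the
fluid velocity `u`: the sum of the homogeneous parts of degree `≤ N` in `u`,
`f^{eq,(N)}_u(c) = ∑_{n=0}^N (1/n!) (d^n/dt^n)|_{t=0} f^eq_{tu}(c)`. -/
noncomputable def maxwellBoltzmannTrunc (D : ℕ) (θ : ℝ) (N : ℕ)
    (u c : EuclideanSpace ℝ (Fin D)) : ℝ :=
  ∑ n ∈ Finset.range (N + 1), (1 / (n.factorial : ℝ)) *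
    iteratedDeriv n (fun t : ℝ => maxwellBoltzmann D θ (t • u) c) 0

/-!
For fixed `c`, `f^eq_{tu}(c) = f^eq_0(c) · exp (t ⟪c, u⟫ / θ - t² ‖u‖² / (2θ))` is an entire
function of `t` whose Taylor coefficients are the homogeneous parts of `f^eq_u(c)`. They are bounded
in absolute value by the Taylor coefficients of `f^eq_0(c) · exp (|t ⟪c, u⟫| / θ + t² ‖u‖² / (2θ))`,
which has finite polynomial moments, so by dominated convergence the moment
`Φ(t) = ∫ (c·v)^m f^eq_{tu}(c) dc` is the power series whose coefficients are the moments of the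
homogeneous parts. The translation `c ↦ c + t u` shows that `Φ` is a polynomial of degree `≤ m`.
Hence the moments of the homogeneous parts of degree `> m` vanish, and those of degree `≤ N` add
up to `Φ(1)`.
-/

open scoped Nat RealInnerProductSpace

lemma iteratedDeriv_zero_eq_of_hasSum_pow {𝕜 : Type*} [RCLike 𝕜]
    {f : 𝕜 → 𝕜} {a : ℕ → 𝕜} (h : ∀ t, HasSum (fun n => a n * t ^ n) (f t))
    (n : ℕ) : iteratedDeriv n f 0 = n ! * a n := by
  have hf : HasFPowerSeriesOnBall f (FormalMultilinearSeries.ofScalars 𝕜 a) 0 ⊤ := by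
    refine ⟨?_, by simp, fun {y} _ => ?_⟩
    · refine (FormalMultilinearSeries.radius_eq_top_of_forall_nnreal_isBigO _ fun r => ?_).ge
      refine Filter.Tendsto.isBigO_one ℝ (c := 0) ?_
      simpa [FormalMultilinearSeries.ofScalars_norm] using
        (h ((r : ℝ) : 𝕜)).summable.tendsto_atTop_zero.norm
    · simpa [FormalMultilinearSeries.ofScalars_apply_eq, mul_comm] using h y
  simpa [iteratedDeriv_eq_iteratedFDeriv, FormalMultilinearSeries.ofScalars_apply_eq] using
    (hf.factorial_smul 1 n).symm

lemma coeff_eq_of_hasSum_pow {𝕜 : Type*} [RCLike 𝕜] {f : 𝕜 → 𝕜} {a b : ℕ → 𝕜}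
    (ha : ∀ t, HasSum (fun n => a n * t ^ n) (f t))
    (hb : ∀ t, HasSum (fun n => b n * t ^ n) (f t)) (n : ℕ) : a n = b n := by
  have := (iteratedDeriv_zero_eq_of_hasSum_pow ha n).symm.trans
    (iteratedDeriv_zero_eq_of_hasSum_pow hb n)
  exact mul_left_cancel₀ (by exact_mod_cast n.factorial_ne_zero) this

noncomputable def evenExpCoeff (x : ℝ) (j : ℕ) : ℝ :=
  if Even j then x ^ (j / 2) / (j / 2)! else 0

/-- The Taylor coefficients of `t ↦ exp (b t + g t²)`, as the Cauchy product of those of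
`exp (b t)` and `exp (g t²)`. -/
noncomputable def expQuadCoeff (b g : ℝ) (n : ℕ) : ℝ :=
  ∑ ij ∈ antidiagonal n, b ^ ij.1 / ij.1 ! * evenExpCoeff g ij.2

lemma hasSum_evenExpCoeff (x : ℝ) : HasSum (evenExpCoeff x) (exp x) := by
  have heven : HasSum (fun k => evenExpCoeff x (2 * k)) (exp x) := by
    simpa [evenExpCoeff, exp_eq_exp_ℝ] using NormedSpace.expSeries_div_hasSum_exp x
  have hodd : HasSum (fun k => evenExpCoeff x (2 * k + 1)) 0 := by
    simp [evenExpCoeff, hasSum_zero]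
  simpa using heven.even_add_odd hodd

lemma evenExpCoeff_mul_sq (x t : ℝ) (j : ℕ) :
    evenExpCoeff (x * t ^ 2) j = evenExpCoeff x j * t ^ j := by
  unfold evenExpCoeff
  split_ifs with hj
  · obtain ⟨k, rfl⟩ := hj
    rw [← two_mul, Nat.mul_div_cancel_left k two_pos, mul_pow, ← pow_mul]
    ring
  · simp

lemma abs_evenExpCoeff (x : ℝ) (j : ℕ) : |evenExpCoeff x j| = evenExpCoeff |x| j := by
  unfold evenExpCoeff
  split_ifs <;> simp [abs_div]

lemma hasSum_expQuadCoeff_mul_pow (b g t : ℝ) :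
    HasSum (fun n => expQuadCoeff b g n * t ^ n) (exp (b * t + g * t ^ 2)) := by
  have hb : HasSum (fun i => (b * t) ^ i / (i ! : ℝ)) (exp (b * t)) := by
    simpa [exp_eq_exp_ℝ] using NormedSpace.expSeries_div_hasSum_exp (b * t)
  have hb_norm : Summable fun i => ‖(b * t) ^ i / (i ! : ℝ)‖ := by
    simpa [abs_div, exp_eq_exp_ℝ] using (NormedSpace.expSeries_div_hasSum_exp |b * t|).summable
  have hg_norm : Summable fun j => ‖evenExpCoeff (g * t ^ 2) j‖ := by
    simp only [Real.norm_eq_abs, abs_evenExpCoeff]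
    exact (hasSum_evenExpCoeff _).summable
  have hterm : (fun n => expQuadCoeff b g n * t ^ n) = fun n =>
      ∑ ij ∈ antidiagonal n, (b * t) ^ ij.1 / (ij.1 ! : ℝ) * evenExpCoeff (g * t ^ 2) ij.2 := by
    funext n
    rw [expQuadCoeff, sum_mul]
    refine sum_congr rfl fun ij hij => ?_
    rw [evenExpCoeff_mul_sq, ← mem_antidiagonal.mp hij, pow_add, mul_pow]
    ring
  rw [hterm, exp_add, ← hb.tsum_eq, ← (hasSum_evenExpCoeff _).tsum_eq,
    tsum_mul_tsum_eq_tsum_sum_antidiagonal_of_summable_norm hb_norm hg_norm]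
  exact (summable_norm_sum_mul_antidiagonal_of_summable_norm hb_norm hg_norm).of_norm.hasSum

lemma abs_expQuadCoeff_le (b g : ℝ) (n : ℕ) : |expQuadCoeff b g n| ≤ expQuadCoeff |b| |g| n := by
  refine (abs_sum_le_sum_abs _ _).trans_eq (sum_congr rfl fun ij _ => ?_)
  simp [abs_div, abs_evenExpCoeff]

section ExpMoments

variable {E : Type*} [NormedAddCommGroup E] [InnerProductSpace ℝ E] [MeasurableSpace E]
  {μ : Measure E} {ρ : E → ℝ}

def HasExpMoments (μ : Measure E) (ρ : E → ℝ) : Prop :=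
  ∀ w : E, Integrable (fun c => exp ⟪c, w⟫ * ρ c) μ

lemma HasExpMoments.integrable (h : HasExpMoments μ ρ) : Integrable ρ μ := by
  simpa using h 0

lemma HasExpMoments.exp_abs_inner_mul [OpensMeasurableSpace E] (h : HasExpMoments μ ρ)
    (v : E) :
    HasExpMoments μ (fun c => exp |⟪c, v⟫| * ρ c) := by
  intro w
  refine ((h (w + v)).norm.add (h (w - v)).norm).mono' ?_ (ae_of_all _ fun c => ?_)
  · exact (by fun_prop : Continuous fun c : E => exp ⟪c, w⟫ * exp |⟪c, v⟫|).aestronglyMeasurable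
      |>.mul h.integrable.aestronglyMeasurable |>.congr (ae_of_all _ fun c => by simp [mul_assoc])
  · calc ‖exp ⟪c, w⟫ * (exp |⟪c, v⟫| * ρ c)‖ = exp ⟪c, w⟫ * exp |⟪c, v⟫| * |ρ c| := by
          simp only [norm_mul, Real.norm_eq_abs, abs_exp, mul_assoc]
      _ ≤ exp ⟪c, w⟫ * (exp ⟪c, v⟫ + exp (-⟪c, v⟫)) * |ρ c| := by gcongr; exact exp_abs_le _
      _ = ‖exp ⟪c, w + v⟫ * ρ c‖ + ‖exp ⟪c, w - v⟫ * ρ c‖ := by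
          simp only [norm_mul, Real.norm_eq_abs, abs_exp, sub_eq_add_neg, inner_add_right,
            inner_neg_right, exp_add]
          ring

lemma HasExpMoments.inner_pow_mul [OpensMeasurableSpace E] (h : HasExpMoments μ ρ) (v : E)
    (k : ℕ) :
    HasExpMoments μ (fun c => ⟪c, v⟫ ^ k * ρ c) := by
  intro w
  refine ((h.exp_abs_inner_mul v w).norm.const_mul (k ! : ℝ)).mono' ?_ (ae_of_all _ fun c => ?_)
  · exact (by fun_prop : Continuous fun c : E => exp ⟪c, w⟫ * ⟪c, v⟫ ^ k).aestronglyMeasurable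
      |>.mul h.integrable.aestronglyMeasurable |>.congr (ae_of_all _ fun c => by simp [mul_assoc])
  · have hpow : |⟪c, v⟫| ^ k ≤ k ! * exp |⟪c, v⟫| := by
      have := pow_div_factorial_le_exp |⟪c, v⟫| (abs_nonneg _) k
      rwa [div_le_iff₀ (by positivity), mul_comm] at this
    calc ‖exp ⟪c, w⟫ * (⟪c, v⟫ ^ k * ρ c)‖ = exp ⟪c, w⟫ * (|⟪c, v⟫| ^ k * |ρ c|) := by
          simp only [norm_mul, Real.norm_eq_abs, abs_exp, abs_pow]
      _ ≤ exp ⟪c, w⟫ * ((k ! * exp |⟪c, v⟫|) * |ρ c|) := by gcongr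
      _ = k ! * ‖exp ⟪c, w⟫ * (exp |⟪c, v⟫| * ρ c)‖ := by
          simp only [norm_mul, Real.norm_eq_abs, abs_exp]; ring

end ExpMoments

section MaxwellBoltzmann

variable {D : ℕ} {θ : ℝ}

lemma hasExpMoments_maxwellBoltzmann_zero (hθ : 0 < θ) :
    HasExpMoments volume (maxwellBoltzmann D θ 0) := by
  intro w
  have hb : 0 < (1 / (2 * θ) : ℂ).re := by simp [hθ]
  refine ((GaussianFourier.integrable_cexp_neg_mul_sq_norm_add hb 1 w).norm.const_mul
    ((2 * π * θ) ^ (-(D : ℝ) / 2))).congr (ae_of_all _ fun c => ?_)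
  simp only [Complex.norm_exp, maxwellBoltzmann, sub_zero]
  rw [real_inner_comm, mul_left_comm, ← exp_add]
  congr 2
  simp [← Complex.ofReal_pow]
  ring

noncomputable def maxwellBoltzmannHomogPart (D : ℕ) (θ : ℝ) (u c : EuclideanSpace ℝ (Fin D))
    (n : ℕ) : ℝ :=
  maxwellBoltzmann D θ 0 c * expQuadCoeff (⟪c, u⟫ / θ) (-‖u‖ ^ 2 / (2 * θ)) n

lemma maxwellBoltzmann_smul_eq (u c : EuclideanSpace ℝ (Fin D)) (t : ℝ) :
    maxwellBoltzmann D θ (t • u) c =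
      maxwellBoltzmann D θ 0 c * exp (⟪c, u⟫ / θ * t + -‖u‖ ^ 2 / (2 * θ) * t ^ 2) := by
  have hsq : ‖c - t • u‖ ^ 2 = ‖c‖ ^ 2 - 2 * (t * ⟪c, u⟫) + t ^ 2 * ‖u‖ ^ 2 := by
    rw [norm_sub_sq_real, real_inner_smul_right, norm_smul, Real.norm_eq_abs, mul_pow, sq_abs]
  rw [maxwellBoltzmann, maxwellBoltzmann, sub_zero, mul_assoc (_ ^ _), ← exp_add, hsq]
  ring_nf

lemma hasSum_maxwellBoltzmannHomogPart_mul_pow (u c : EuclideanSpace ℝ (Fin D)) (t : ℝ) :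
    HasSum (fun n => maxwellBoltzmannHomogPart D θ u c n * t ^ n)
      (maxwellBoltzmann D θ (t • u) c) := by
  rw [maxwellBoltzmann_smul_eq]
  simpa only [maxwellBoltzmannHomogPart, mul_assoc] using
    (hasSum_expQuadCoeff_mul_pow _ _ t).mul_left (maxwellBoltzmann D θ 0 c)

lemma maxwellBoltzmannTrunc_eq_sum (N : ℕ) (u c : EuclideanSpace ℝ (Fin D)) :
    maxwellBoltzmannTrunc D θ N u c =
      ∑ n ∈ range (N + 1), maxwellBoltzmannHomogPart D θ u c n := by
  refine sum_congr rfl fun n _ => ?_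
  rw [iteratedDeriv_zero_eq_of_hasSum_pow (hasSum_maxwellBoltzmannHomogPart_mul_pow u c),
    ← mul_assoc, one_div_mul_cancel (by exact_mod_cast n.factorial_ne_zero), one_mul]

lemma integrable_inner_pow_mul_maxwellBoltzmannHomogPart (hθ : 0 < θ) (m n : ℕ)
    (u v : EuclideanSpace ℝ (Fin D)) :
    Integrable fun c => ⟪c, v⟫ ^ m * maxwellBoltzmannHomogPart D θ u c n := by
  simp_rw [maxwellBoltzmannHomogPart, expQuadCoeff, mul_sum]
  refine integrable_finsetSum _ fun ij _ => ?_
  have := (((hasExpMoments_maxwellBoltzmann_zero hθ).inner_pow_mul u ij.1).inner_pow_mul v m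
    ).integrable.const_mul (evenExpCoeff (-‖u‖ ^ 2 / (2 * θ)) ij.2 / (θ ^ ij.1 * ij.1 !))
  refine this.congr (ae_of_all _ fun c => ?_)
  simp only [div_pow]
  field_simp

lemma hasSum_integral_inner_pow_mul_maxwellBoltzmannHomogPart (hθ : 0 < θ) (m : ℕ)
    (u v : EuclideanSpace ℝ (Fin D)) (t : ℝ) :
    HasSum (fun n => (∫ c, ⟪c, v⟫ ^ m * maxwellBoltzmannHomogPart D θ u c n) * t ^ n)
      (∫ c, ⟪c, v⟫ ^ m * maxwellBoltzmann D θ (t • u) c) := by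
  set g := -‖u‖ ^ 2 / (2 * θ)
  set M := fun c : EuclideanSpace ℝ (Fin D) => |⟪c, v⟫ ^ m * maxwellBoltzmann D θ 0 c|
  have hbound_sum : ∀ c, HasSum (fun n => M c * (expQuadCoeff |⟪c, u⟫ / θ| |g| n * |t| ^ n))
      (M c * exp (|⟪c, u⟫ / θ| * |t| + |g| * |t| ^ 2)) :=
    fun c => (hasSum_expQuadCoeff_mul_pow _ _ _).mul_left _
  have hbound_int : Integrable fun c => M c * exp (|⟪c, u⟫ / θ| * |t| + |g| * |t| ^ 2) := by
    have := ((hasExpMoments_maxwellBoltzmann_zero hθ).inner_pow_mul v m).exp_abs_inner_mul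
      ((|t| / θ) • u) 0 |>.norm.mul_const (exp (|g| * |t| ^ 2))
    refine this.congr (ae_of_all _ fun c => ?_)
    simp only [inner_zero_right, exp_zero, one_mul, norm_mul, Real.norm_eq_abs, abs_exp,
      real_inner_smul_right, exp_add, M, abs_mul, abs_div, abs_abs, abs_of_pos hθ]
    ring_nf
  simp_rw [← integral_mul_const]
  refine hasSum_integral_of_dominated_convergence _
    (fun n => ((integrable_inner_pow_mul_maxwellBoltzmannHomogPart hθ m n u v).mul_const
      (t ^ n)).aestronglyMeasurable) (fun n => ae_of_all _ fun c => ?_)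
    (ae_of_all _ fun c => (hbound_sum c).summable)
    (hbound_int.congr (ae_of_all _ fun c => (hbound_sum c).tsum_eq.symm))
    (ae_of_all _ fun c => ?_)
  · have hcoeff := abs_expQuadCoeff_le (⟪c, u⟫ / θ) g n
    simp only [maxwellBoltzmannHomogPart, norm_mul, Real.norm_eq_abs, abs_pow, M, abs_mul]
    calc _ = |⟪c, v⟫| ^ m * |maxwellBoltzmann D θ 0 c| *
            (|expQuadCoeff (⟪c, u⟫ / θ) g n| * |t| ^ n) := by ring
      _ ≤ _ := by gcongr
  · simpa only [mul_assoc] using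
      (hasSum_maxwellBoltzmannHomogPart_mul_pow u c t).mul_left (⟪c, v⟫ ^ m)

lemma maxwellBoltzmann_add_right (u c : EuclideanSpace ℝ (Fin D)) :
    maxwellBoltzmann D θ u (c + u) = maxwellBoltzmann D θ 0 c := by
  simp [maxwellBoltzmann]

lemma hasSum_integral_inner_pow_mul_maxwellBoltzmann_smul (hθ : 0 < θ) (m : ℕ)
    (u v : EuclideanSpace ℝ (Fin D)) (t : ℝ) :
    HasSum (fun k => (m.choose k * ⟪u, v⟫ ^ k *
        ∫ c, ⟪c, v⟫ ^ (m - k) * maxwellBoltzmann D θ 0 c) * t ^ k)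
      (∫ c, ⟪c, v⟫ ^ m * maxwellBoltzmann D θ (t • u) c) := by
  have hshift : ∫ c, ⟪c, v⟫ ^ m * maxwellBoltzmann D θ (t • u) c =
      ∑ k ∈ range (m + 1), ∫ c, (m.choose k * (t * ⟪u, v⟫) ^ k) *
        (⟪c, v⟫ ^ (m - k) * maxwellBoltzmann D θ 0 c) := by
    rw [← integral_add_right_eq_self _ (t • u), ← integral_finsetSum]
    · congr 1 with c
      rw [maxwellBoltzmann_add_right, inner_add_left, real_inner_smul_left, add_comm, add_pow,
        sum_mul]
      refine sum_congr rfl fun k _ => by ring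
    · exact fun k _ => (((hasExpMoments_maxwellBoltzmann_zero hθ).inner_pow_mul v
        (m - k)).integrable.const_mul _)
  simp_rw [hshift, integral_const_mul, mul_pow, ← mul_assoc, mul_right_comm _ (t ^ _)]
  exact hasSum_sum_of_ne_finset_zero fun k hk => by
    rw [Nat.choose_eq_zero_of_lt (by simpa using hk)]; simp

theorem truncated_continuum_moments_eq_general
    (D : ℕ) (θ : ℝ) (hθ : 0 < θ) (N : ℕ)
    (u v : EuclideanSpace ℝ (Fin D)) :
    ∀ m : ℕ, m ≤ N →
      ∫ c : EuclideanSpace ℝ (Fin D), (inner ℝ c v : ℝ) ^ m * maxwellBoltzmannTrunc D θ N u c =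
        ∫ c : EuclideanSpace ℝ (Fin D), (inner ℝ c v : ℝ) ^ m * maxwellBoltzmann D θ u c := by
  intro m hm
  set A := fun n => ∫ c, ⟪c, v⟫ ^ m * maxwellBoltzmannHomogPart D θ u c n
  have hA : ∀ t : ℝ, HasSum (fun n => A n * t ^ n) _ :=
    hasSum_integral_inner_pow_mul_maxwellBoltzmannHomogPart hθ m u v
  have hA_zero : ∀ n ∉ range (N + 1), A n = 0 := fun n hn => by
    rw [coeff_eq_of_hasSum_pow hA (hasSum_integral_inner_pow_mul_maxwellBoltzmann_smul hθ m u v)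
      n, Nat.choose_eq_zero_of_lt (by rw [mem_range] at hn; omega), Nat.cast_zero, zero_mul,
      zero_mul]
  calc ∫ c, ⟪c, v⟫ ^ m * maxwellBoltzmannTrunc D θ N u c = ∑ n ∈ range (N + 1), A n := by
        simp_rw [maxwellBoltzmannTrunc_eq_sum, mul_sum]
        exact integral_finsetSum _ fun n _ =>
          integrable_inner_pow_mul_maxwellBoltzmannHomogPart hθ m n u v
    _ = ∫ c, ⟪c, v⟫ ^ m * maxwellBoltzmann D θ ((1 : ℝ) • u) c :=
        (hasSum_sum_of_ne_finset_zero hA_zero).unique (by simpa using hA 1)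
    _ = _ := by rw [one_smul]

/-- Moments of the Maxwell–Boltzmann distribution up to order `N` are unchanged
by the `N`-th order truncation in the fluid velocity: for `m ≤ N`,
`∫ (c·v)^m f^{eq,(N)}_u(c) dc = ∫ (c·v)^m f^eq_u(c) dc`. -/
theorem truncated_continuum_moments_eq
    (D : ℕ) (hD : 1 ≤ D) (θ : ℝ) (hθ : 0 < θ) (N : ℕ)
    (u v : EuclideanSpace ℝ (Fin D)) :
    ∀ m : ℕ, m ≤ N →
      ∫ c : EuclideanSpace ℝ (Fin D), (inner ℝ c v : ℝ) ^ m * maxwellBoltzmannTrunc D θ N u c =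
        ∫ c : EuclideanSpace ℝ (Fin D), (inner ℝ c v : ℝ) ^ m * maxwellBoltzmann D θ u c :=
  truncated_continuum_moments_eq_general D θ hθ N u v
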